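/- In the setting of Theorem on random treatment paths (Yt = Yt(0) + St·Dt, (D1, D2) ⊥ (Y1(0), Y2(0), S1, S2), finite second moments, V(ΔD) > 0), if additionally cov(D1, D2) ≤ 0, then the weights w_t = (V(D_t) − cov(D1, D2))/(V(D1) + V(D2) − 2·cov(D1, D2)) are nonnegative and sum to 1, so β = cov(ΔD, ΔY)/V(ΔD) is a convex combination of E(S1) and E(S2). -/

import Mathlib

open MeasureTheory ProbabilityTheory

noncomputable def cov {Ω : Type*} [MeasurableSpace Ω] (μ : Measure Ω) (X Y : Ω → ℝ) : ℝ :=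
  ∫ ω, (X ω - ∫ x, X x ∂μ) * (Y ω - ∫ x, Y x ∂μ) ∂μ

noncomputable def var {Ω : Type*} [MeasurableSpace Ω] (μ : Measure Ω) (X : Ω → ℝ) : ℝ :=
  cov μ X X

/-- Conditional expectation of `X` given the σ-algebra generated by `W`. -/
noncomputable def cexp {Ω E : Type*} [MeasurableSpace Ω] [MeasurableSpace E]
    (μ : Measure Ω) (W : Ω → E) (X : Ω → ℝ) : Ω → ℝ :=
  μ[X | MeasurableSpace.comap W inferInstance]

/-- Conditional variance of `X` given the σ-algebra generated by `W`. -/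
noncomputable def cvar {Ω E : Type*} [MeasurableSpace Ω] [MeasurableSpace E]
    (μ : Measure Ω) (W : Ω → E) (X : Ω → ℝ) : Ω → ℝ :=
  cexp μ W (fun ω => (X ω - cexp μ W X ω) ^ 2)

lemma L2mul {Ω : Type*} [MeasurableSpace Ω] {μ : Measure Ω} {f g : Ω → ℝ}
    [IsFiniteMeasure μ] (hf : MemLp f 2 μ) (hg : MemLp g 2 μ) :
    Integrable (fun ω => f ω * g ω) μ := by
  have h : MemLp (f • g) 1 μ := by
    haveI : ENNReal.HolderTriple 2 2 1 := ⟨by norm_num [ENNReal.inv_two_add_inv_two]⟩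
    exact hg.smul hf
  exact h.integrable le_rfl

lemma var_nonneg' {Ω : Type*} [MeasurableSpace Ω] (μ : Measure Ω) (X : Ω → ℝ) :
    0 ≤ var μ X :=
  integral_nonneg fun ω => mul_self_nonneg _

lemma cov_eq {Ω : Type*} [MeasurableSpace Ω] (μ : Measure Ω) [IsProbabilityMeasure μ]
    {X Y : Ω → ℝ} (hX : Integrable X μ) (hY : Integrable Y μ)
    (hXY : Integrable (fun ω => X ω * Y ω) μ) :
    cov μ X Y = (∫ ω, X ω * Y ω ∂μ) - (∫ ω, X ω ∂μ) * (∫ ω, Y ω ∂μ) := by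
  unfold cov
  have h : (fun ω => (X ω - ∫ x, X x ∂μ) * (Y ω - ∫ x, Y x ∂μ))
      = fun ω => (X ω * Y ω - (∫ x, X x ∂μ) * Y ω) - ((∫ x, Y x ∂μ) * X ω
          - (∫ x, X x ∂μ) * (∫ x, Y x ∂μ)) := by
    funext ω; ring
  have h1 : Integrable (fun ω => X ω * Y ω - (∫ x, X x ∂μ) * Y ω) μ :=
    hXY.sub (hY.const_mul _)
  have h2 : Integrable (fun ω => (∫ x, Y x ∂μ) * X ω - (∫ x, X x ∂μ) * (∫ x, Y x ∂μ)) μ :=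
    (hX.const_mul _).sub (integrable_const _)
  have h3 : Integrable (fun ω => (∫ x, X x ∂μ) * Y ω) μ := hY.const_mul _
  have h4 : Integrable (fun ω => (∫ x, Y x ∂μ) * X ω) μ := hX.const_mul _
  rw [h, integral_sub h1 h2, integral_sub hXY h3, integral_sub h4 (integrable_const _),
    integral_const_mul, integral_const_mul, integral_const]
  simp [measure_univ]
  ring

/-- With randomly assigned treatment paths and nonpositively correlated treatments, the
first-difference coefficient is a convex combination of `E(S1)` and `E(S2)`. -/
theorem stmt15 {Ω : Type*} [MeasurableSpace Ω] (μ : Measure Ω) [IsProbabilityMeasure μ]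
    (Y10 Y20 S1 S2 D1 D2 : Ω → ℝ)
    (hY10 : MemLp Y10 2 μ) (hY20 : MemLp Y20 2 μ) (hS1 : MemLp S1 2 μ)
    (hS2 : MemLp S2 2 μ) (hD1 : MemLp D1 2 μ) (hD2 : MemLp D2 2 μ)
    (hind : IndepFun (fun ω => (D1 ω, D2 ω))
      (fun ω => (Y10 ω, Y20 ω, S1 ω, S2 ω)) μ)
    (hvar : 0 < var μ (fun ω => D2 ω - D1 ω))
    (hcov : cov μ D1 D2 ≤ 0) :
    0 ≤ (var μ D1 - cov μ D1 D2) / (var μ D1 + var μ D2 - 2 * cov μ D1 D2) ∧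
    0 ≤ (var μ D2 - cov μ D1 D2) / (var μ D1 + var μ D2 - 2 * cov μ D1 D2) ∧
    (var μ D1 - cov μ D1 D2) / (var μ D1 + var μ D2 - 2 * cov μ D1 D2)
      + (var μ D2 - cov μ D1 D2) / (var μ D1 + var μ D2 - 2 * cov μ D1 D2) = 1 ∧
    cov μ (fun ω => D2 ω - D1 ω)
        (fun ω => (Y20 ω + S2 ω * D2 ω) - (Y10 ω + S1 ω * D1 ω)) /
      var μ (fun ω => D2 ω - D1 ω)
    = (var μ D1 - cov μ D1 D2) / (var μ D1 + var μ D2 - 2 * cov μ D1 D2)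
        * (∫ ω, S1 ω ∂μ)
      + (var μ D2 - cov μ D1 D2) / (var μ D1 + var μ D2 - 2 * cov μ D1 D2)
        * (∫ ω, S2 ω ∂μ) := by
  -- measurability of the two random vectors
  have hVm : AEMeasurable (fun ω => (D1 ω, D2 ω)) μ :=
    hD1.aestronglyMeasurable.aemeasurable.prodMk hD2.aestronglyMeasurable.aemeasurable
  have hWm : AEMeasurable (fun ω => (Y10 ω, Y20 ω, S1 ω, S2 ω)) μ :=
    hY10.aestronglyMeasurable.aemeasurable.prodMk
      (hY20.aestronglyMeasurable.aemeasurable.prodMk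
        (hS1.aestronglyMeasurable.aemeasurable.prodMk hS2.aestronglyMeasurable.aemeasurable))
  have key : ∀ (φ : ℝ × ℝ → ℝ) (ψ : ℝ × ℝ × ℝ × ℝ → ℝ), Measurable φ → Measurable ψ →
      ∫ ω, φ (D1 ω, D2 ω) * ψ (Y10 ω, Y20 ω, S1 ω, S2 ω) ∂μ
        = (∫ ω, φ (D1 ω, D2 ω) ∂μ) * ∫ ω, ψ (Y10 ω, Y20 ω, S1 ω, S2 ω) ∂μ := by
    intro φ ψ hφ hψ
    exact IndepFun.integral_mul_eq_mul_integral (hind.comp hφ hψ)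
      ((hφ.comp_aemeasurable hVm).aestronglyMeasurable)
      ((hψ.comp_aemeasurable hWm).aestronglyMeasurable)
  have keyI : ∀ (φ : ℝ × ℝ → ℝ), Measurable φ → Integrable (fun ω => φ (D1 ω, D2 ω)) μ →
      ∀ (ψ : ℝ × ℝ × ℝ × ℝ → ℝ), Measurable ψ →
        Integrable (fun ω => ψ (Y10 ω, Y20 ω, S1 ω, S2 ω)) μ →
      Integrable (fun ω => φ (D1 ω, D2 ω) * ψ (Y10 ω, Y20 ω, S1 ω, S2 ω)) μ := by
    intro φ hφ hφi ψ hψ hψi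
    exact IndepFun.integrable_mul (hind.comp hφ hψ) hφi hψi
  -- factorizations
  have k1 : ∫ ω, D1 ω * Y10 ω ∂μ = (∫ ω, D1 ω ∂μ) * ∫ ω, Y10 ω ∂μ :=
    key (fun p => p.1) (fun q => q.1) (by fun_prop) (by fun_prop)
  have k2 : ∫ ω, D1 ω * Y20 ω ∂μ = (∫ ω, D1 ω ∂μ) * ∫ ω, Y20 ω ∂μ :=
    key (fun p => p.1) (fun q => q.2.1) (by fun_prop) (by fun_prop)
  have k3 : ∫ ω, D2 ω * Y10 ω ∂μ = (∫ ω, D2 ω ∂μ) * ∫ ω, Y10 ω ∂μ :=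
    key (fun p => p.2) (fun q => q.1) (by fun_prop) (by fun_prop)
  have k4 : ∫ ω, D2 ω * Y20 ω ∂μ = (∫ ω, D2 ω ∂μ) * ∫ ω, Y20 ω ∂μ :=
    key (fun p => p.2) (fun q => q.2.1) (by fun_prop) (by fun_prop)
  have k5 : ∫ ω, D1 ω * S1 ω ∂μ = (∫ ω, D1 ω ∂μ) * ∫ ω, S1 ω ∂μ :=
    key (fun p => p.1) (fun q => q.2.2.1) (by fun_prop) (by fun_prop)
  have k6 : ∫ ω, D2 ω * S2 ω ∂μ = (∫ ω, D2 ω ∂μ) * ∫ ω, S2 ω ∂μ :=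
    key (fun p => p.2) (fun q => q.2.2.2) (by fun_prop) (by fun_prop)
  have k7 : ∫ ω, D1 ω * D1 ω * S1 ω ∂μ = (∫ ω, D1 ω * D1 ω ∂μ) * ∫ ω, S1 ω ∂μ :=
    key (fun p => p.1 * p.1) (fun q => q.2.2.1) (by fun_prop) (by fun_prop)
  have k8 : ∫ ω, D1 ω * D2 ω * S1 ω ∂μ = (∫ ω, D1 ω * D2 ω ∂μ) * ∫ ω, S1 ω ∂μ :=
    key (fun p => p.1 * p.2) (fun q => q.2.2.1) (by fun_prop) (by fun_prop)
  have k9 : ∫ ω, D1 ω * D2 ω * S2 ω ∂μ = (∫ ω, D1 ω * D2 ω ∂μ) * ∫ ω, S2 ω ∂μ :=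
    key (fun p => p.1 * p.2) (fun q => q.2.2.2) (by fun_prop) (by fun_prop)
  have k10 : ∫ ω, D2 ω * D2 ω * S2 ω ∂μ = (∫ ω, D2 ω * D2 ω ∂μ) * ∫ ω, S2 ω ∂μ :=
    key (fun p => p.2 * p.2) (fun q => q.2.2.2) (by fun_prop) (by fun_prop)
  -- basic integrabilities
  have iD1 : Integrable D1 μ := hD1.integrable one_le_two
  have iD2 : Integrable D2 μ := hD2.integrable one_le_two
  have iY10 : Integrable Y10 μ := hY10.integrable one_le_two
  have iY20 : Integrable Y20 μ := hY20.integrable one_le_two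
  have iS1 : Integrable S1 μ := hS1.integrable one_le_two
  have iS2 : Integrable S2 μ := hS2.integrable one_le_two
  have I1 : Integrable (fun ω => D2 ω * Y20 ω) μ := L2mul hD2 hY20
  have I2 : Integrable (fun ω => D2 ω * D2 ω * S2 ω) μ :=
    keyI (fun p => p.2 * p.2) (by fun_prop) (L2mul hD2 hD2) (fun q => q.2.2.2) (by fun_prop) iS2
  have I3 : Integrable (fun ω => D2 ω * Y10 ω) μ := L2mul hD2 hY10
  have I4 : Integrable (fun ω => D1 ω * D2 ω * S1 ω) μ :=
    keyI (fun p => p.1 * p.2) (by fun_prop) (L2mul hD1 hD2) (fun q => q.2.2.1) (by fun_prop) iS1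
  have I5 : Integrable (fun ω => D1 ω * Y20 ω) μ := L2mul hD1 hY20
  have I6 : Integrable (fun ω => D1 ω * D2 ω * S2 ω) μ :=
    keyI (fun p => p.1 * p.2) (by fun_prop) (L2mul hD1 hD2) (fun q => q.2.2.2) (by fun_prop) iS2
  have I7 : Integrable (fun ω => D1 ω * Y10 ω) μ := L2mul hD1 hY10
  have I8 : Integrable (fun ω => D1 ω * D1 ω * S1 ω) μ :=
    keyI (fun p => p.1 * p.1) (by fun_prop) (L2mul hD1 hD1) (fun q => q.2.2.1) (by fun_prop) iS1
  have iS1D1 : Integrable (fun ω => S1 ω * D1 ω) μ := L2mul hS1 hD1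
  have iS2D2 : Integrable (fun ω => S2 ω * D2 ω) μ := L2mul hS2 hD2
  have iDD : Integrable (fun ω => D2 ω - D1 ω) μ := iD2.sub iD1
  have iDY : Integrable (fun ω => (Y20 ω + S2 ω * D2 ω) - (Y10 ω + S1 ω * D1 ω)) μ :=
    (iY20.add iS2D2).sub (iY10.add iS1D1)
  -- the big product integrand, expanded
  have hexp : (fun ω => (D2 ω - D1 ω) * ((Y20 ω + S2 ω * D2 ω) - (Y10 ω + S1 ω * D1 ω)))
      = (fun ω => (((((((D2 ω * Y20 ω + D2 ω * D2 ω * S2 ω) - D2 ω * Y10 ω)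
          - D1 ω * D2 ω * S1 ω) - D1 ω * Y20 ω) - D1 ω * D2 ω * S2 ω)
          + D1 ω * Y10 ω) + D1 ω * D1 ω * S1 ω)) := by
    funext ω; ring
  have J12 : Integrable (fun ω => D2 ω * Y20 ω + D2 ω * D2 ω * S2 ω) μ := I1.add I2
  have J3 : Integrable (fun ω => (D2 ω * Y20 ω + D2 ω * D2 ω * S2 ω) - D2 ω * Y10 ω) μ :=
    J12.sub I3
  have J4 : Integrable (fun ω => ((D2 ω * Y20 ω + D2 ω * D2 ω * S2 ω) - D2 ω * Y10 ω)
      - D1 ω * D2 ω * S1 ω) μ := J3.sub I4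
  have J5 : Integrable (fun ω => (((D2 ω * Y20 ω + D2 ω * D2 ω * S2 ω) - D2 ω * Y10 ω)
      - D1 ω * D2 ω * S1 ω) - D1 ω * Y20 ω) μ := J4.sub I5
  have J6 : Integrable (fun ω => ((((D2 ω * Y20 ω + D2 ω * D2 ω * S2 ω) - D2 ω * Y10 ω)
      - D1 ω * D2 ω * S1 ω) - D1 ω * Y20 ω) - D1 ω * D2 ω * S2 ω) μ := J5.sub I6
  have J7 : Integrable (fun ω => (((((D2 ω * Y20 ω + D2 ω * D2 ω * S2 ω) - D2 ω * Y10 ω)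
      - D1 ω * D2 ω * S1 ω) - D1 ω * Y20 ω) - D1 ω * D2 ω * S2 ω) + D1 ω * Y10 ω) μ :=
    J6.add I7
  have J8 : Integrable (fun ω => ((((((D2 ω * Y20 ω + D2 ω * D2 ω * S2 ω) - D2 ω * Y10 ω)
      - D1 ω * D2 ω * S1 ω) - D1 ω * Y20 ω) - D1 ω * D2 ω * S2 ω) + D1 ω * Y10 ω)
      + D1 ω * D1 ω * S1 ω) μ := J7.add I8
  have iProd : Integrable (fun ω => (D2 ω - D1 ω)
      * ((Y20 ω + S2 ω * D2 ω) - (Y10 ω + S1 ω * D1 ω))) μ := hexp ▸ J8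
  have split : ∫ ω, (D2 ω - D1 ω) * ((Y20 ω + S2 ω * D2 ω) - (Y10 ω + S1 ω * D1 ω)) ∂μ
      = (((((((∫ ω, D2 ω * Y20 ω ∂μ) + ∫ ω, D2 ω * D2 ω * S2 ω ∂μ)
          - ∫ ω, D2 ω * Y10 ω ∂μ) - ∫ ω, D1 ω * D2 ω * S1 ω ∂μ)
          - ∫ ω, D1 ω * Y20 ω ∂μ) - ∫ ω, D1 ω * D2 ω * S2 ω ∂μ)
          + ∫ ω, D1 ω * Y10 ω ∂μ) + ∫ ω, D1 ω * D1 ω * S1 ω ∂μ := by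
    rw [hexp, integral_add J7 I8, integral_add J6 I7, integral_sub J5 I6,
      integral_sub J4 I5, integral_sub J3 I4, integral_sub J12 I3, integral_add I1 I2]
  -- integral of ΔD and ΔY
  have intDD : ∫ ω, (D2 ω - D1 ω) ∂μ = (∫ ω, D2 ω ∂μ) - ∫ ω, D1 ω ∂μ :=
    integral_sub iD2 iD1
  have intDY : ∫ ω, ((Y20 ω + S2 ω * D2 ω) - (Y10 ω + S1 ω * D1 ω)) ∂μ
      = ((∫ ω, Y20 ω ∂μ) + (∫ ω, D2 ω ∂μ) * ∫ ω, S2 ω ∂μ)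
        - ((∫ ω, Y10 ω ∂μ) + (∫ ω, D1 ω ∂μ) * ∫ ω, S1 ω ∂μ) := by
    have iA : Integrable (fun ω => Y20 ω + S2 ω * D2 ω) μ := iY20.add iS2D2
    have iB : Integrable (fun ω => Y10 ω + S1 ω * D1 ω) μ := iY10.add iS1D1
    rw [integral_sub iA iB, integral_add iY20 iS2D2,
      integral_add iY10 iS1D1, ← k6, ← k5]
    simp_rw [mul_comm]
  -- expand all the covariances
  have cDD : cov μ (fun ω => D2 ω - D1 ω)
        (fun ω => (Y20 ω + S2 ω * D2 ω) - (Y10 ω + S1 ω * D1 ω))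
      = (∫ ω, S1 ω ∂μ) * (var μ D1 - cov μ D1 D2)
        + (∫ ω, S2 ω ∂μ) * (var μ D2 - cov μ D1 D2) := by
    rw [cov_eq μ iDD iDY iProd, split, intDD, intDY, k1, k2, k3, k4, k7, k8, k9, k10]
    rw [show var μ D1 = cov μ D1 D1 from rfl, show var μ D2 = cov μ D2 D2 from rfl,
      cov_eq μ iD1 iD1 (L2mul hD1 hD1), cov_eq μ iD2 iD2 (L2mul hD2 hD2),
      cov_eq μ iD1 iD2 (L2mul hD1 hD2)]
    ring
  have vDD : var μ (fun ω => D2 ω - D1 ω)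
      = var μ D1 + var μ D2 - 2 * cov μ D1 D2 := by
    have e : (fun ω => (D2 ω - D1 ω) * (D2 ω - D1 ω))
        = (fun ω => (D2 ω * D2 ω - D1 ω * D2 ω) - (D1 ω * D2 ω - D1 ω * D1 ω)) := by
      funext ω; ring
    have iP : Integrable (fun ω => (D2 ω - D1 ω) * (D2 ω - D1 ω)) μ :=
      L2mul (hD2.sub hD1) (hD2.sub hD1)
    rw [show var μ (fun ω => D2 ω - D1 ω) = cov μ (fun ω => D2 ω - D1 ω)
        (fun ω => D2 ω - D1 ω) from rfl,
      cov_eq μ iDD iDD iP, show var μ D1 = cov μ D1 D1 from rfl,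
      show var μ D2 = cov μ D2 D2 from rfl,
      cov_eq μ iD1 iD1 (L2mul hD1 hD1), cov_eq μ iD2 iD2 (L2mul hD2 hD2),
      cov_eq μ iD1 iD2 (L2mul hD1 hD2), intDD, e]
    have iC : Integrable (fun ω => D2 ω * D2 ω - D1 ω * D2 ω) μ :=
      (L2mul hD2 hD2).sub (L2mul hD1 hD2)
    have iD : Integrable (fun ω => D1 ω * D2 ω - D1 ω * D1 ω) μ :=
      (L2mul hD1 hD2).sub (L2mul hD1 hD1)
    rw [integral_sub iC iD, integral_sub (L2mul hD2 hD2) (L2mul hD1 hD2),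
      integral_sub (L2mul hD1 hD2) (L2mul hD1 hD1)]
    ring
  have hv1 : 0 ≤ var μ D1 := var_nonneg' μ D1
  have hv2 : 0 ≤ var μ D2 := var_nonneg' μ D2
  have hden : 0 < var μ D1 + var μ D2 - 2 * cov μ D1 D2 := vDD ▸ hvar
  refine ⟨div_nonneg (by linarith) hden.le, div_nonneg (by linarith) hden.le, ?_, ?_⟩
  · rw [← add_div, div_eq_one_iff_eq hden.ne']
    ring
  · rw [cDD, vDD]
    field_simp
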